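/- Let 𝒞 and ℱ be classes of graphs, and let T be an immersive transduction encoding a class 𝒟 in ℱ (i.e. 𝒟 ⊆ T(ℱ)) with 𝒟 ⊇ 𝒞 ∨ K₁, where 𝒞 ∨ K₁ is the class of graphs obtained from members of 𝒞 by adding an apex vertex adjacent to all vertices. Then there exists an integer r such that 𝒞 ⊑°_FO 𝓛_r(ℱ). -/

import Mathlib

open SimpleGraph

/-! ### Finite graphs and colored graphs -/

/-- A finite simple graph. -/
structure FGraph : Type 1 where
  V : Type
  [fin : Finite V]
  G : SimpleGraph V

attribute [instance] FGraph.fin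

/-- A finite simple graph colored by `c` unary predicates. -/
structure CGraph (c : ℕ) : Type 1 where
  V : Type
  [fin : Finite V]
  G : SimpleGraph V
  color : Fin c → Set V

attribute [instance] CGraph.fin

/-! ### First-order formulas over `c`-colored graphs -/

/-- First-order formulas in the language of graphs with `c` unary predicates,
with free variables among `Fin m`. -/
inductive Fml (c : ℕ) : ℕ → Type where
  | eq {m} : Fin m → Fin m → Fml c m
  | adj {m} : Fin m → Fin m → Fml c m
  | col {m} : Fin c → Fin m → Fml c m
  | not {m} : Fml c m → Fml c m
  | or {m} : Fml c m → Fml c m → Fml c m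
  | ex {m} : Fml c (m + 1) → Fml c m

/-- Satisfaction of a first-order formula in a colored graph. -/
def Fml.Sat {c : ℕ} (A : CGraph c) : {m : ℕ} → Fml c m → (Fin m → A.V) → Prop
  | _, .eq i j, v => v i = v j
  | _, .adj i j, v => A.G.Adj (v i) (v j)
  | _, .col i x, v => v x ∈ A.color i
  | _, .not φ, v => ¬ Fml.Sat A φ v
  | _, .or φ ψ, v => Fml.Sat A φ v ∨ Fml.Sat A ψ v
  | _, .ex φ, v => ∃ w : A.V, Fml.Sat A φ (Fin.snoc v w)

/-! ### Simple interpretations and transductions -/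

/-- A simple interpretation of graphs in `c`-colored graphs: a pair of formulas
`(ν(x), η(x,y))` with `η` symmetric and anti-reflexive. -/
structure Interp (c : ℕ) where
  ν : Fml c 1
  η : Fml c 2
  symm : ∀ (A : CGraph c) (u v : A.V), Fml.Sat A η ![u, v] → Fml.Sat A η ![v, u]
  irrefl : ∀ (A : CGraph c) (v : A.V), ¬ Fml.Sat A η ![v, v]

/-- The graph interpreted in a colored graph. -/
def Interp.result {c : ℕ} (I : Interp c) (A : CGraph c) :
    SimpleGraph {v : A.V // Fml.Sat A I.ν ![v]} where
  Adj u v := Fml.Sat A I.η ![u.1, v.1]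
  symm := ⟨fun u v h => I.symm A u.1 v.1 h⟩
  loopless := ⟨fun v h => I.irrefl A v.1 h⟩

/-- The `k`-copy operation on graphs: the copies of a vertex form a clique, and copies
with the same index are adjacent iff the original vertices are. -/
def copyGraph {V : Type} (G : SimpleGraph V) (k : ℕ) : SimpleGraph (V × Fin k) where
  Adj a b := (a.1 = b.1 ∧ a.2 ≠ b.2) ∨ (G.Adj a.1 b.1 ∧ a.2 = b.2)
  symm := by
    constructor
    rintro a b (⟨h1, h2⟩ | ⟨h1, h2⟩)
    · exact Or.inl ⟨h1.symm, h2.symm⟩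
    · exact Or.inr ⟨h1.symm, h2.symm⟩
  loopless := by
    constructor
    rintro a (⟨_, h⟩ | ⟨h, _⟩)
    · exact h rfl
    · exact G.loopless.irrefl _ h

/-- The `k`-copy operation on finite graphs. -/
def FGraph.copy (G : FGraph) (k : ℕ) : FGraph where
  V := G.V × Fin k
  G := copyGraph G.G k

/-- A transduction: a composition `I ∘ Γ_𝒰 ∘ C_k` of a copy operation, a coloring
operation and a simple interpretation. -/
structure Transduction where
  k : ℕ
  kpos : 0 < k
  c : ℕ
  I : Interp c

/-- The colored graph obtained from `C_k(G)` by a choice of coloring. -/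
def Transduction.copyCGraph (T : Transduction) (G : FGraph)
    (color : Fin T.c → Set (G.V × Fin T.k)) : CGraph T.c where
  V := G.V × Fin T.k
  G := copyGraph G.G T.k
  color := color

/-- `H ∈ T(G)` (up to isomorphism). -/
def Transduction.mem (T : Transduction) (G H : FGraph) : Prop :=
  ∃ color : Fin T.c → Set (G.V × Fin T.k),
    Nonempty (H.G ≃g T.I.result (T.copyCGraph G color))

/-- The image `T(𝒟)` of a class of graphs under a transduction. -/
def TImage (T : Transduction) (D : Set FGraph) : Set FGraph :=
  {H | ∃ G ∈ D, T.mem G H}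

/-- `𝒞 ⊑_FO 𝒟` : `𝒞` is a first-order transduction of `𝒟`. -/
def SqFO (C D : Set FGraph) : Prop := ∃ T : Transduction, C ⊆ TImage T D

/-- `𝒞 ⊑°_FO 𝒟` : `𝒞` is a non-copying first-order transduction of `𝒟`. -/
def SqFOnc (C D : Set FGraph) : Prop := ∃ T : Transduction, T.k = 1 ∧ C ⊆ TImage T D

/-- `𝒞 ≡_FO 𝒟`. -/
def EquivFO (C D : Set FGraph) : Prop := SqFO C D ∧ SqFO D C

/-- `T'` subsumes `T` : `T'(G) ⊇ T(G)` for every graph `G`. -/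
def Subsumes (T' T : Transduction) : Prop := ∀ G H : FGraph, T.mem G H → T'.mem G H

/-! ### Perturbations -/

/-- The subset complementation `⊕M`: complement the adjacency between distinct
vertices that both belong to `M`. -/
def scompGraph {V : Type} (G : SimpleGraph V) (M : Set V) : SimpleGraph V where
  Adj u v := u ≠ v ∧ (G.Adj u v ↔ ¬(u ∈ M ∧ v ∈ M))
  symm := by
    constructor
    rintro u v ⟨h1, h2⟩
    refine ⟨h1.symm, ?_, ?_⟩
    · intro h hm
      exact (h2.mp (G.adj_symm h)) ⟨hm.2, hm.1⟩
    · intro h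
      exact G.adj_symm (h2.mpr fun hm => h ⟨hm.2, hm.1⟩)
  loopless := ⟨fun v h => h.1 rfl⟩

/-- Applying a finite sequence of subset complementations. -/
def perturbGraph {V : Type} : List (Set V) → SimpleGraph V → SimpleGraph V
  | [], G => G
  | M :: Ms, G => perturbGraph Ms (scompGraph G M)

/-- `H ∈ P(G)` for a perturbation `P` that is the composition of `p` subset
complementations (up to isomorphism). -/
def PerturbMem (p : ℕ) (G H : FGraph) : Prop :=
  ∃ Z : Fin p → Set G.V, Nonempty (H.G ≃g perturbGraph (List.ofFn Z) G.G)

/-- The image `P(𝒟)` of a class under a perturbation with `p` marks. -/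
def PerturbImage (p : ℕ) (D : Set FGraph) : Set FGraph :=
  {H | ∃ G ∈ D, PerturbMem p G H}

/-- `𝒞` is a perturbation of `𝒟`. -/
def IsPerturbationOfClass (C D : Set FGraph) : Prop := ∃ p, C ⊆ PerturbImage p D

/-! ### Locality -/

/-- The ball of radius `r` around a set `S` of vertices. -/
def ballSet {V : Type} (G : SimpleGraph V) (r : ℕ) (S : Set V) : Set V :=
  {v | ∃ u ∈ S, G.Reachable u v ∧ G.dist u v ≤ r}

lemma mem_ballSet_self {V : Type} (G : SimpleGraph V) (r : ℕ) {S : Set V} {v : V}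
    (hv : v ∈ S) : v ∈ ballSet G r S :=
  ⟨v, hv, Reachable.refl v, by rw [SimpleGraph.dist_self]; exact Nat.zero_le r⟩

/-- The colored subgraph induced on a set of vertices. -/
def CGraph.induce {c : ℕ} (A : CGraph c) (S : Set A.V) : CGraph c where
  V := ↥S
  G := A.G.induce S
  color := fun i => {v | (v : A.V) ∈ A.color i}

/-- A formula is `r`-local if its truth only depends on the subgraph induced by the
ball of radius `r` around its free variables. -/
def IsLocalFml {c m : ℕ} (r : ℕ) (φ : Fml c m) : Prop :=
  ∀ (A : CGraph c) (v : Fin m → A.V),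
    Fml.Sat A φ v ↔
      Fml.Sat (A.induce (ballSet A.G r (Set.range v))) φ
        (fun i => ⟨v i, mem_ballSet_self A.G r (Set.mem_range_self i)⟩)

/-- A formula is strongly `r`-local if it is `r`-local and, whenever it holds of a
tuple, the entries of the tuple are pairwise at distance at most `r`. -/
def IsStronglyLocalFml {c m : ℕ} (r : ℕ) (φ : Fml c m) : Prop :=
  IsLocalFml r φ ∧
    ∀ (A : CGraph c) (v : Fin m → A.V), Fml.Sat A φ v →
      ∀ i j : Fin m, A.G.Reachable (v i) (v j) ∧ A.G.dist (v i) (v j) ≤ r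

/-- An immersive transduction: non-copying, with strongly local formulas. -/
def Transduction.Immersive (T : Transduction) : Prop :=
  T.k = 1 ∧ ∃ r : ℕ, IsStronglyLocalFml r T.I.ν ∧ IsStronglyLocalFml r T.I.η

/-! ### Graph classes -/

/-- A set of graphs closed under isomorphism. -/
def IsoClosed (C : Set FGraph) : Prop :=
  ∀ G H : FGraph, Nonempty (G.G ≃g H.G) → G ∈ C → H ∈ C

/-- `H` is (isomorphic to) an induced subgraph of `G`. -/
def IsInducedSubgraphOf (H G : FGraph) : Prop :=
  ∃ f : H.V → G.V, Function.Injective f ∧ ∀ u v, H.G.Adj u v ↔ G.G.Adj (f u) (f v)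

/-- A hereditary class: closed under induced subgraphs. -/
def HereditaryClass (C : Set FGraph) : Prop :=
  ∀ G ∈ C, ∀ H : FGraph, IsInducedSubgraphOf H G → H ∈ C

/-- `H` is (isomorphic to) a subgraph of `G`. -/
def IsSubgraphOf (H G : FGraph) : Prop :=
  ∃ f : H.V → G.V, Function.Injective f ∧ ∀ u v, H.G.Adj u v → G.G.Adj (f u) (f v)

/-- The monotone closure of a class: all subgraphs of its members. -/
def monotoneClosure (C : Set FGraph) : Set FGraph :=
  {H | ∃ G ∈ C, IsSubgraphOf H G}

/-- `G` contains `K_{t,t}` as a subgraph. -/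
def HasKtt {V : Type} (G : SimpleGraph V) (t : ℕ) : Prop :=
  ∃ a b : Fin t → V, Function.Injective a ∧ Function.Injective b ∧
    (∀ i j, a i ≠ b j) ∧ ∀ i j, G.Adj (a i) (b j)

/-- A weakly sparse class: some `K_{t,t}` is a subgraph of no member. -/
def WeaklySparse (C : Set FGraph) : Prop := ∃ t : ℕ, ∀ G ∈ C, ¬ HasKtt G.G t

/-- Disjoint union of two graphs. -/
def sumGraph {V W : Type} (G : SimpleGraph V) (H : SimpleGraph W) : SimpleGraph (V ⊕ W) where
  Adj a b := match a, b with
    | .inl u, .inl v => G.Adj u v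
    | .inr u, .inr v => H.Adj u v
    | _, _ => False
  symm := by
    constructor
    rintro (u | u) (v | v) h
    · exact G.adj_symm h
    · exact h.elim
    · exact h.elim
    · exact H.adj_symm h
  loopless := by
    constructor
    rintro (v | v) h
    · exact G.loopless.irrefl _ h
    · exact H.loopless.irrefl _ h

/-- Disjoint union of finite graphs. -/
def FGraph.disjUnion (G H : FGraph) : FGraph where
  V := G.V ⊕ H.V
  G := sumGraph G.G H.G

/-- An addable class: closed under disjoint unions. -/
def Addable (C : Set FGraph) : Prop :=
  ∀ G ∈ C, ∀ H ∈ C, FGraph.disjUnion G H ∈ C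

/-- The degree of a vertex. -/
noncomputable def degCard (G : FGraph) (v : G.V) : ℕ := Nat.card {u : G.V // G.G.Adj v u}

/-- A class with bounded maximum degree. -/
def BddDegree (C : Set FGraph) : Prop := ∃ D : ℕ, ∀ G ∈ C, ∀ v : G.V, degCard G v ≤ D
/-! ### Further graph constructions and parameters -/

/-- Auxiliary instance. -/
instance {α : Type} [Finite α] : Finite (Option α) :=
  Finite.of_equiv _ (Equiv.optionEquivSumPUnit.{0,0} α).symm

/-- Adding an apex vertex adjacent to all vertices. -/
def apexGraph {V : Type} (G : SimpleGraph V) : SimpleGraph (Option V) where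
  Adj a b := match a, b with
    | none, none => False
    | none, some _ => True
    | some _, none => True
    | some u, some v => G.Adj u v
  symm := by
    constructor
    rintro (_ | u) (_ | v) h
    · exact h.elim
    · trivial
    · trivial
    · exact G.adj_symm h
  loopless := by
    constructor
    rintro (_ | v) h
    · exact h.elim
    · exact G.loopless.irrefl _ h

/-- The class `𝒞 ∨ K₁` of graphs of `𝒞` with an added apex. -/
def JoinK1 (C : Set FGraph) : Set FGraph :=
  {H | ∃ G ∈ C, Nonempty (H.G ≃g apexGraph G.G)}

/-- The ball of radius `r` around a vertex, as a finite graph. -/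
def ballFGraph (G : FGraph) (r : ℕ) (v : G.V) : FGraph where
  V := ↥(ballSet G.G r {v})
  G := G.G.induce (ballSet G.G r {v})

/-- The class `𝓛_r(ℱ)` of all balls of radius `r` of graphs of `ℱ`. -/
def LocClass (r : ℕ) (F : Set FGraph) : Set FGraph :=
  {H | ∃ G ∈ F, ∃ v : G.V, Nonempty (H.G ≃g (ballFGraph G r v).G)}

/-- Adding a pendant vertex adjacent only to `v`. -/
def pendantGraph {V : Type} (G : SimpleGraph V) (v : V) : SimpleGraph (Option V) where
  Adj a b := match a, b with
    | none, none => False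
    | none, some w => w = v
    | some u, none => u = v
    | some u, some w => G.Adj u w
  symm := by
    constructor
    rintro (_ | u) (_ | w) h
    · exact h.elim
    · exact h
    · exact h
    · exact G.adj_symm h
  loopless := by
    constructor
    rintro (_ | w) h
    · exact h.elim
    · exact G.loopless.irrefl _ h

/-- The finite graph obtained by adding a pendant vertex at `v`. -/
def FGraph.addPendant (G : FGraph) (v : G.V) : FGraph where
  V := Option G.V
  G := pendantGraph G.G v

/-- `G` is obtained from `H` by adding at most `h` vertices, joined arbitrarily. -/
def NearlyOf (h : ℕ) (G H : FGraph) : Prop :=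
  ∃ f : H.V → G.V, Function.Injective f ∧
    (∀ u v, H.G.Adj u v ↔ G.G.Adj (f u) (f v)) ∧
    Nat.card {v : G.V // v ∉ Set.range f} ≤ h

/-- The class `𝒞` is nearly `𝒟`. -/
def Nearly (C D : Set FGraph) : Prop :=
  ∃ h : ℕ, ∀ G ∈ C, ∃ H ∈ D, NearlyOf h G H

/-- The class `ℰ` of all edgeless graphs. -/
def EdgelessClass : Set FGraph := {G | ∀ u v : G.V, ¬ G.G.Adj u v}

/-- All members of the class have connected components of bounded size. -/
def BddComponents (D : Set FGraph) : Prop :=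
  ∃ n : ℕ, ∀ G ∈ D, ∀ v : G.V, Nat.card {u : G.V // G.G.Reachable v u} ≤ n

/-- The class of all cubic (3-regular) graphs. -/
def CubicClass : Set FGraph := {G | ∀ v : G.V, degCard G v = 3}

/-- The class `𝒫` of all paths. -/
def PathClass : Set FGraph :=
  {G | ∃ n : ℕ, Nonempty (G.G ≃g SimpleGraph.pathGraph n)}

/-- The `ℓ`-th power of a graph: two vertices are adjacent iff their distance
is between `1` and `ℓ`. -/
def powGraph {V : Type} (G : SimpleGraph V) (ℓ : ℕ) : SimpleGraph V where
  Adj u v := u ≠ v ∧ G.Reachable u v ∧ G.dist u v ≤ ℓ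
  symm := by
    constructor
    rintro u v ⟨h1, h2, h3⟩
    exact ⟨h1.symm, h2.symm, by rwa [SimpleGraph.dist_comm]⟩
  loopless := ⟨fun v h => h.1 rfl⟩

/-- The bandwidth of `G` is at most `ℓ` : `G` is a subgraph of the `ℓ`-th power
of a path. -/
def BandwidthLE (G : FGraph) (ℓ : ℕ) : Prop :=
  ∃ n : ℕ, ∃ f : G.V → Fin n, Function.Injective f ∧
    ∀ u v, G.G.Adj u v → (powGraph (SimpleGraph.pathGraph n) ℓ).Adj (f u) (f v)

/-- A class with bounded bandwidth. -/
def BddBandwidth (D : Set FGraph) : Prop := ∃ ℓ : ℕ, ∀ G ∈ D, BandwidthLE G ℓ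

/-- The class of all cubic trees: trees all of whose vertices have degree 3 or 1. -/
def CubicTreeClass : Set FGraph :=
  {G | G.G.IsTree ∧ ∀ v : G.V, degCard G v = 3 ∨ degCard G v = 1}

/-- `H` contains a clique on `s` vertices. -/
def HasCliqueN {V : Type} (H : SimpleGraph V) (s : ℕ) : Prop :=
  ∃ f : Fin s → V, Function.Injective f ∧ ∀ i j, i ≠ j → H.Adj (f i) (f j)

/-- A chordal graph: no induced cycle of length at least 4. -/
def IsChordal {V : Type} (H : SimpleGraph V) : Prop :=
  ∀ n : ℕ, 4 ≤ n → ¬ ∃ f : Fin n → V, Function.Injective f ∧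
    ∀ i j, (SimpleGraph.cycleGraph n).Adj i j ↔ H.Adj (f i) (f j)

/-- `tw(G) ≤ n` : `G` is a subgraph of a chordal graph with clique number at most `n+1`. -/
def TreewidthLE (G : FGraph) (n : ℕ) : Prop :=
  ∃ H : SimpleGraph G.V, IsChordal H ∧ G.G ≤ H ∧ ¬ HasCliqueN H (n + 2)

/-- A class with bounded treewidth. -/
def BddTreewidth (D : Set FGraph) : Prop := ∃ n : ℕ, ∀ G ∈ D, TreewidthLE G n

/-- An interval graph: the intersection graph of a family of real intervals. -/
def IsIntervalGraph {V : Type} (H : SimpleGraph V) : Prop :=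
  ∃ l r : V → ℝ, (∀ v, l v ≤ r v) ∧
    ∀ u v, u ≠ v → (H.Adj u v ↔ (l u ≤ r v ∧ l v ≤ r u))

/-- `pw(G) ≤ n` : `G` is a subgraph of an interval graph with clique number at
most `n+1`. -/
def PathwidthLE (G : FGraph) (n : ℕ) : Prop :=
  ∃ H : SimpleGraph G.V, IsIntervalGraph H ∧ G.G ≤ H ∧ ¬ HasCliqueN H (n + 2)

/-- The class `𝒫𝒲_n` of all graphs of pathwidth at most `n`. -/
def PWClass (n : ℕ) : Set FGraph := {G | PathwidthLE G n}

/-- `G` is a forest of depth at most `n` : it is acyclic and roots may be chosen,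
one in each connected component, such that every vertex is at distance at most
`n - 1` from the root of its component. -/
def ForestDepthLE (n : ℕ) (G : FGraph) : Prop :=
  G.G.IsAcyclic ∧ ∃ ρ : G.V → G.V,
    (∀ v, G.G.Reachable (ρ v) v ∧ G.G.dist (ρ v) v ≤ n - 1) ∧
    ∀ u v, G.G.Reachable u v → ρ u = ρ v

/-- The class `𝒯_n` of forests of depth at most `n`. -/
def TreeDepthClass (n : ℕ) : Set FGraph := {G | ForestDepthLE n G}

/-- A star forest: an acyclic graph with no path on four distinct vertices. -/
def IsStarForest (G : FGraph) : Prop :=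
  G.G.IsAcyclic ∧ ∀ a b c d : G.V, G.G.Adj a b → G.G.Adj b c → G.G.Adj c d →
    a = c ∨ b = d ∨ a = d

/-- The class `𝒯₂` of all star forests. -/
def StarForestClass : Set FGraph := {G | IsStarForest G}

/-- `H` is a depth-`r` shallow minor of `G` : it is obtained by contracting
pairwise disjoint connected subgraphs of radius at most `r` and deleting
vertices and edges. -/
def IsShallowMinor (r : ℕ) (H G : FGraph) : Prop :=
  ∃ φ : H.V → Set G.V,
    (∀ v, (φ v).Nonempty) ∧
    (∀ u v, u ≠ v → Disjoint (φ u) (φ v)) ∧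
    (∀ v : H.V, ∃ c : ↥(φ v), ∀ u : ↥(φ v),
      (G.G.induce (φ v)).Reachable c u ∧ (G.G.induce (φ v)).dist c u ≤ r) ∧
    (∀ u v : H.V, H.G.Adj u v → ∃ a ∈ φ u, ∃ b ∈ φ v, G.G.Adj a b)

/-- The average degree of `H` is at most `d`. -/
def AvgDegLE (H : FGraph) (d : ℕ) : Prop :=
  2 * Nat.card H.G.edgeSet ≤ d * Nat.card H.V

/-- A class of bounded expansion: for some `f : ℕ → ℕ`, every depth-`r` shallow
minor of a member has average degree at most `f r`. -/
def BoundedExpansion (C : Set FGraph) : Prop :=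
  ∃ f : ℕ → ℕ, ∀ r : ℕ, ∀ G ∈ C, ∀ H : FGraph, IsShallowMinor r H G → AvgDegLE H (f r)

/-- A proper coloring `f` of `G` with `n` colors is a star coloring if no path on
four vertices receives only two colors. -/
def IsStarColoring {V : Type} (G : SimpleGraph V) (n : ℕ) (f : V → Fin n) : Prop :=
  (∀ u v, G.Adj u v → f u ≠ f v) ∧
  ∀ a b c d, G.Adj a b → G.Adj b c → G.Adj c d → a ≠ c → b ≠ d → a ≠ d →
    ¬ (f a = f c ∧ f b = f d)

/-- A class with bounded star chromatic number. -/
def BddStarChrom (C : Set FGraph) : Prop :=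
  ∃ n : ℕ, ∀ G ∈ C, ∃ f : G.V → Fin n, IsStarColoring G.G n f


/-
The apex of `G ∨ K₁` is interpreted at a vertex `w` of some `H ∈ ℱ`. Every other vertex of the
interpreted graph is `η`-adjacent to it, hence within distance `r` of `w` by strong locality of
`η`; and an `r`-local formula at a tuple within distance `r` of `w` only sees the ball of radius
`2r` around `w`. So, once `w` is marked by an extra colour, the interpretation
`ν'(x) = ν(x) ∧ ∃ y, marked(y) ∧ η(x, y)`, `η' = η` recovers `G` from that ball.
-/

lemma comp_vec_one {α β : Type*} (f : α → β) (x : α) : f ∘ ![x] = ![f x] := by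
  ext i; fin_cases i; rfl

lemma comp_vec_two {α β : Type*} (f : α → β) (x y : α) : f ∘ ![x, y] = ![f x, f y] := by
  ext i; fin_cases i <;> rfl

namespace SimpleGraph

variable {V : Type} {G : SimpleGraph V}

lemma reachable_and_dist_le_iff_edist_le {u v : V} {n : ℕ} :
    G.Reachable u v ∧ G.dist u v ≤ n ↔ G.edist u v ≤ n := by
  constructor
  · rintro ⟨h, hn⟩
    rw [← h.coe_dist_eq_edist]
    exact_mod_cast hn
  · intro h
    have hr : G.Reachable u v := reachable_of_edist_ne_top (ne_top_of_le_ne_top (by simp) h)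
    refine ⟨hr, ?_⟩
    rw [← hr.coe_dist_eq_edist] at h
    exact_mod_cast h

lemma edist_le_edist_induce {s : Set V} (a b : s) : G.edist a b ≤ (G.induce s).edist a b := by
  by_cases h : (G.induce s).Reachable a b
  · obtain ⟨p, hp⟩ := h.exists_walk_length_eq_edist
    rw [← hp, ← Walk.length_map (Embedding.induce s).toHom]
    exact edist_le _
  · simp [edist_eq_top_of_not_reachable h]

def Iso.induceNeighborSet {W : Type} {H : SimpleGraph W} (e : G ≃g H) (v : V) :
    G.induce (G.neighborSet v) ≃g H.induce (H.neighborSet (e v)) :=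
  e.induce (e.image_neighborSet (v := v) ▸ e.injective.injOn.bijOn_image)

end SimpleGraph

open SimpleGraph

section Balls

variable {V : Type} {G : SimpleGraph V}

lemma mem_ballSet_iff {n : ℕ} {S : Set V} {v : V} :
    v ∈ ballSet G n S ↔ ∃ u ∈ S, G.edist u v ≤ n := by
  simp only [ballSet, Set.mem_ofPred_eq, reachable_and_dist_le_iff_edist_le]

lemma ballSet_mono {n : ℕ} {S S' : Set V} (h : S ⊆ S') : ballSet G n S ⊆ ballSet G n S' :=
  fun _ ⟨u, hu, hv⟩ => ⟨u, h hu, hv⟩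

lemma ballSet_ballSet_subset {m n : ℕ} {S : Set V} :
    ballSet G n (ballSet G m S) ⊆ ballSet G (m + n) S := by
  intro z hz
  obtain ⟨v, hv, hvz⟩ := mem_ballSet_iff.1 hz
  obtain ⟨u, hu, huv⟩ := mem_ballSet_iff.1 hv
  refine mem_ballSet_iff.2 ⟨u, hu, ?_⟩
  calc G.edist u z ≤ G.edist u v + G.edist v z := G.edist_triangle
    _ ≤ m + n := add_le_add huv hvz
    _ = ↑(m + n) := by push_cast; rfl

lemma edist_induce_le_of_ballSet_subset {s : Set V} {n : ℕ} {a b : s}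
    (hs : ballSet G n {a.1} ⊆ s) (h : G.edist a b ≤ n) : (G.induce s).edist a b ≤ n := by
  classical
  obtain ⟨p, hp⟩ := (reachable_and_dist_le_iff_edist_le.2 h).1.exists_walk_length_eq_edist
  have hpn : (p.length : ℕ∞) ≤ n := hp ▸ h
  have hsupp : ∀ x ∈ p.support, x ∈ s := fun x hx =>
    hs (mem_ballSet_iff.2 ⟨a, rfl, (edist_le (p.takeUntil x hx)).trans
      (le_trans (by exact_mod_cast p.length_takeUntil_le_length hx) hpn)⟩)
  calc (G.induce s).edist a b ≤ (p.induce s hsupp).length := edist_le _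
    _ = p.length := by rw [← Walk.length_map (Embedding.induce s).toHom, Walk.map_induce]; rfl
    _ ≤ n := hpn

lemma edist_induce_le_iff {s : Set V} {n : ℕ} {a b : s} (hs : ballSet G n {a.1} ⊆ s) :
    (G.induce s).edist a b ≤ n ↔ G.edist a b ≤ n :=
  ⟨(edist_le_edist_induce a b).trans, edist_induce_le_of_ballSet_subset hs⟩

lemma mem_ballSet_induce_iff {s : Set V} {n : ℕ} {ι : Type*} {v : ι → s}
    (hs : ballSet G n (Set.range (Subtype.val ∘ v)) ⊆ s) {z : s} :
    z ∈ ballSet (G.induce s) n (Set.range v) ↔ z.1 ∈ ballSet G n (Set.range (Subtype.val ∘ v)) := by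
  simp only [mem_ballSet_iff, Set.exists_range_iff, Function.comp_apply]
  exact exists_congr fun i => edist_induce_le_iff ((ballSet_mono (by simp)).trans hs)

end Balls

abbrev FGraph.colored {c : ℕ} (G : FGraph) (color : Fin c → Set G.V) : CGraph c :=
  ⟨G.V, G.G, color⟩

abbrev CGraph.reduct {c : ℕ} (A : CGraph (c + 1)) : CGraph c where
  V := A.V
  G := A.G
  color i := A.color i.castSucc

abbrev CGraph.mark {c : ℕ} (A : CGraph c) (M : Set A.V) : CGraph (c + 1) where
  V := A.V
  G := A.G
  color := Fin.snoc A.color M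

namespace Fml

variable {c : ℕ}

def and {m : ℕ} (φ ψ : Fml c m) : Fml c m := .not (.or (.not φ) (.not ψ))

@[simp] lemma sat_and {m : ℕ} (A : CGraph c) (φ ψ : Fml c m) (v : Fin m → A.V) :
    Sat A (φ.and ψ) v ↔ Sat A φ v ∧ Sat A ψ v := by
  simp only [Fml.and, Sat, not_or, not_not]

lemma sat_iso {A B : CGraph c} (e : A.G ≃g B.G) (he : ∀ i x, e x ∈ B.color i ↔ x ∈ A.color i)
    {m : ℕ} (φ : Fml c m) (v : Fin m → A.V) : Sat B φ (e ∘ v) ↔ Sat A φ v := by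
  induction φ with
  | eq i j => exact e.injective.eq_iff
  | adj i j => exact e.map_adj_iff
  | col i x => exact he i (v x)
  | not φ ih => exact not_congr (ih v)
  | or φ ψ ih₁ ih₂ => exact or_congr (ih₁ v) (ih₂ v)
  | ex φ ih =>
    simp only [Sat]
    refine ⟨fun ⟨w, hw⟩ => ⟨e.symm w, ?_⟩, fun ⟨w, hw⟩ => ⟨e w, ?_⟩⟩
    · rw [← ih, Fin.comp_snoc, e.apply_symm_apply]
      exact hw
    · rw [← Fin.comp_snoc, ih]
      exact hw

def lift : ∀ {m : ℕ}, Fml c m → Fml (c + 1) m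
  | _, .eq i j => .eq i j
  | _, .adj i j => .adj i j
  | _, .col i x => .col i.castSucc x
  | _, .not φ => .not φ.lift
  | _, .or φ ψ => .or φ.lift ψ.lift
  | _, .ex φ => .ex φ.lift

@[simp] lemma sat_lift (A : CGraph (c + 1)) {m : ℕ} (φ : Fml c m) (v : Fin m → A.V) :
    Sat A φ.lift v ↔ Sat A.reduct φ v := by
  induction φ with
  | eq | adj | col => rfl
  | not φ ih => exact not_congr (ih v)
  | or φ ψ ih₁ ih₂ => exact or_congr (ih₁ v) (ih₂ v)
  | ex φ ih => exact exists_congr fun w => ih _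

@[simp] lemma sat_lift_mark (A : CGraph c) (M : Set A.V) {m : ℕ} (φ : Fml c m)
    (v : Fin m → A.V) : Sat (A.mark M) φ.lift v ↔ Sat A φ v := by
  refine (sat_lift (A.mark M) φ v).trans ?_
  exact sat_iso (A := A) (B := (A.mark M).reduct) .refl
    (fun i x => by simp only [CGraph.reduct, CGraph.mark, Fin.snoc_castSucc]; rfl) φ v

end Fml

lemma IsLocalFml.sat_induce_iff {c m r : ℕ} {φ : Fml c m} (hφ : IsLocalFml r φ) (A : CGraph c)
    {s : Set A.V} (v : Fin m → s) (hs : ballSet A.G r (Set.range (Subtype.val ∘ v)) ⊆ s) :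
    Fml.Sat (A.induce s) φ v ↔ Fml.Sat A φ (Subtype.val ∘ v) := by
  let e : ((A.induce s).induce (ballSet (A.induce s).G r (Set.range v))).G ≃g
      (A.induce (ballSet A.G r (Set.range (Subtype.val ∘ v)))).G :=
    { toFun := fun z => ⟨z.1.1, (mem_ballSet_induce_iff hs).1 z.2⟩
      invFun := fun z => ⟨⟨z.1, hs z.2⟩, (mem_ballSet_induce_iff hs).2 z.2⟩
      left_inv := fun _ => rfl
      right_inv := fun _ => rfl
      map_rel_iff' := Iff.rfl }
  rw [hφ (A.induce s) v, hφ A]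
  exact (Fml.sat_iso e (fun _ _ => Iff.rfl) φ _).symm

lemma IsLocalFml.sat_induce_iff_of_edist_le {c m r : ℕ} {φ : Fml c m} (hφ : IsLocalFml r φ)
    (A : CGraph c) {s : Set A.V} {w : A.V} (hs : ballSet A.G (2 * r) {w} ⊆ s) (v : Fin m → s)
    (hv : ∀ i, A.G.edist w (v i) ≤ r) :
    Fml.Sat (A.induce s) φ v ↔ Fml.Sat A φ (Subtype.val ∘ v) := by
  refine hφ.sat_induce_iff A v
    ((ballSet_mono ?_).trans (ballSet_ballSet_subset.trans (two_mul r ▸ hs)))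
  rintro _ ⟨i, rfl⟩
  exact mem_ballSet_iff.2 ⟨w, rfl, hv i⟩

lemma IsStronglyLocalFml.edist_le {c m r : ℕ} {φ : Fml c m} (hφ : IsStronglyLocalFml r φ)
    {A : CGraph c} {v : Fin m → A.V} (h : Fml.Sat A φ v) (i j : Fin m) :
    A.G.edist (v i) (v j) ≤ r :=
  reachable_and_dist_le_iff_edist_le.1 (hφ.2 A v h i j)

namespace Interp

variable {c : ℕ} (I : Interp c)

def resultIso {A B : CGraph c} (e : A.G ≃g B.G)
    (he : ∀ i x, e x ∈ B.color i ↔ x ∈ A.color i) : I.result A ≃g I.result B where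
  toEquiv := e.toEquiv.subtypeEquiv fun x => by
    rw [← Fml.sat_iso e he, comp_vec_one]; rfl
  map_rel_iff' {x y} := by
    show Fml.Sat B I.η ![e x.1, e y.1] ↔ Fml.Sat A I.η ![x.1, y.1]
    rw [← Fml.sat_iso e he, comp_vec_two]

def resultNbhd (A : CGraph c) (w : A.V) :
    SimpleGraph {x : {v : A.V // Fml.Sat A I.ν ![v]} // Fml.Sat A I.η ![w, x.1]} :=
  (I.result A).induce {x : {v : A.V // Fml.Sat A I.ν ![v]} | Fml.Sat A I.η ![w, x.1]}

/-- `ν'(x) = ν(x) ∧ ∃ y, y ∈ U_last ∧ η(x, y)` for the new colour `U_last`; under `.ex` the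
variable `1` is the bound `y`. -/
def nbhdOfMarked : Interp (c + 1) where
  ν := I.ν.lift.and (.ex ((Fml.col (Fin.last c) 1).and I.η.lift))
  η := I.η.lift
  symm A u v h := (Fml.sat_lift A I.η _).2 (I.symm A.reduct u v ((Fml.sat_lift A I.η _).1 h))
  irrefl A v h := I.irrefl A.reduct v ((Fml.sat_lift A I.η _).1 h)

lemma sat_nbhdOfMarked_ν_mark (A : CGraph c) (w x : A.V) :
    Fml.Sat (A.mark {w}) I.nbhdOfMarked.ν ![x] ↔ Fml.Sat A I.ν ![x] ∧ Fml.Sat A I.η ![w, x] := by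
  simp only [nbhdOfMarked, Fml.sat_and, Fml.Sat, Fml.sat_lift_mark, Fin.snoc_last,
    Set.mem_singleton_iff, Matrix.Fin.snoc_vecCons, Matrix.Fin.snoc_vecEmpty,
    Matrix.cons_val_one, Matrix.cons_val_fin_one, exists_eq_left]
  exact and_congr_right fun _ => ⟨I.symm A x w, I.symm A w x⟩

def nbhdOfMarkedResultIso (A : CGraph c) (w : A.V) :
    I.nbhdOfMarked.result (A.mark {w}) ≃g I.resultNbhd A w where
  toEquiv := (Equiv.subtypeEquivRight (I.sat_nbhdOfMarked_ν_mark A w)).trans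
    (Equiv.subtypeSubtypeEquivSubtypeInter _ _).symm
  map_rel_iff' {x y} := (Fml.sat_lift_mark A {w} I.η ![x.1, y.1]).symm

section Locality

variable {r : ℕ} {A : CGraph c} {s : Set A.V}

lemma sat_induce_ν_iff (hν : IsLocalFml r I.ν) {w : A.V} (hs : ballSet A.G (2 * r) {w} ⊆ s)
    {x : s} (hx : A.G.edist w x ≤ r) :
    Fml.Sat (A.induce s) I.ν ![x] ↔ Fml.Sat A I.ν ![x.1] := by
  refine (hν.sat_induce_iff_of_edist_le A hs ![x] (Fin.forall_fin_one.2 hx)).trans ?_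
  rw [comp_vec_one]

lemma sat_induce_η_iff (hη : IsLocalFml r I.η) {w : A.V} (hs : ballSet A.G (2 * r) {w} ⊆ s)
    {x y : s} (hx : A.G.edist w x ≤ r) (hy : A.G.edist w y ≤ r) :
    Fml.Sat (A.induce s) I.η ![x, y] ↔ Fml.Sat A I.η ![x.1, y.1] := by
  refine (hη.sat_induce_iff_of_edist_le A hs ![x, y] (Fin.forall_fin_two.2 ⟨hx, hy⟩)).trans ?_
  rw [comp_vec_two]

def resultNbhdInduceIso (hν : IsLocalFml r I.ν) (hη : IsStronglyLocalFml r I.η) (w : s)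
    (hs : ballSet A.G (2 * r) {w.1} ⊆ s) : I.resultNbhd (A.induce s) w ≃g I.resultNbhd A w.1 :=
  have near_induce (x : s) (h : Fml.Sat (A.induce s) I.η ![w, x]) : A.G.edist w x ≤ r :=
    (edist_le_edist_induce w x).trans (hη.edist_le h 0 1)
  have near (y : A.V) (h : Fml.Sat A I.η ![w.1, y]) : A.G.edist w y ≤ r := hη.edist_le h 0 1
  have mem (y : A.V) (h : Fml.Sat A I.η ![w.1, y]) : y ∈ s :=
    hs (mem_ballSet_iff.2 ⟨w, rfl, (near y h).trans (by norm_cast; omega)⟩)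
  have hw : A.G.edist w w ≤ r := by simp
  { toFun x := ⟨⟨x.1.1.1, (I.sat_induce_ν_iff hν hs (near_induce _ x.2)).1 x.1.2⟩,
      (I.sat_induce_η_iff hη.1 hs hw (near_induce _ x.2)).1 x.2⟩
    invFun y := ⟨⟨⟨y.1.1, mem _ y.2⟩,
      (I.sat_induce_ν_iff hν hs (x := ⟨y.1.1, mem _ y.2⟩) (near _ y.2)).2 y.1.2⟩,
      (I.sat_induce_η_iff hη.1 hs hw (y := ⟨y.1.1, mem _ y.2⟩) (near _ y.2)).2 y.2⟩
    left_inv _ := rfl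
    right_inv _ := rfl
    map_rel_iff' {x y} :=
      (I.sat_induce_η_iff hη.1 hs (near_induce _ x.2) (near_induce _ y.2)).symm }

end Locality

end Interp

def apexGraphNbhdIso {V : Type} (G : SimpleGraph V) :
    (apexGraph G).induce ((apexGraph G).neighborSet none) ≃g G where
  toEquiv := (Equiv.subtypeEquivRight fun o => by cases o <;> simp [apexGraph]).trans
    (Equiv.optionIsSomeEquiv V)
  map_rel_iff' {x y} := by
    obtain ⟨_ | u, hu⟩ := x
    · exact hu.elim
    obtain ⟨_ | v, hv⟩ := y
    · exact hv.elim
    rfl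

def copyGraphOneIso {V : Type} (G : SimpleGraph V) : copyGraph G 1 ≃g G where
  toEquiv := Equiv.prodUnique V (Fin 1)
  map_rel_iff' {a b} := by
    refine ⟨fun h => Or.inr ⟨h, Subsingleton.elim _ _⟩, ?_⟩
    rintro (⟨_, h⟩ | ⟨h, _⟩)
    exacts [absurd (Subsingleton.elim _ _) h, h]

lemma Transduction.mem_iff_colored {T : Transduction} (hk : T.k = 1) {G H : FGraph} :
    T.mem G H ↔ ∃ color : Fin T.c → Set G.V, Nonempty (H.G ≃g T.I.result (G.colored color)) := by
  obtain ⟨k, _, c, I⟩ := T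
  dsimp only at hk
  subst hk
  constructor
  · rintro ⟨color, ⟨e⟩⟩
    refine ⟨fun i => {v | (v, 0) ∈ color i}, ⟨e.trans (I.resultIso (copyGraphOneIso G.G) ?_)⟩⟩
    intro i x
    rw [← Prod.mk.eta (p := x), Subsingleton.elim x.2 0]
    rfl
  · rintro ⟨color, ⟨e⟩⟩
    exact ⟨fun i => Prod.fst ⁻¹' color i,
      ⟨e.trans (I.resultIso (copyGraphOneIso G.G) fun _ _ => Iff.rfl).symm⟩⟩

lemma Interp.exists_ballFGraph_iso_of_apex {c r : ℕ} (I : Interp c) (hν : IsLocalFml r I.ν)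
    (hη : IsStronglyLocalFml r I.η) {G H : FGraph} {color : Fin c → Set H.V}
    (e : apexGraph G.G ≃g I.result (H.colored color)) :
    ∃ w : H.V, ∃ color' : Fin (c + 1) → Set (ballFGraph H (2 * r) w).V,
      Nonempty (G.G ≃g I.nbhdOfMarked.result ((ballFGraph H (2 * r) w).colored color')) := by
  let A := H.colored color
  let w := (e none).1
  let s := ballSet H.G (2 * r) {w}
  let w' : s := ⟨w, mem_ballSet_self _ _ rfl⟩
  refine ⟨w, ((A.induce s).mark {w'}).color, ⟨?_⟩⟩
  have e₁ : G.G ≃g I.resultNbhd A w := (apexGraphNbhdIso G.G).symm.trans (e.induceNeighborSet none)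
  have e₂ : I.resultNbhd (A.induce s) w' ≃g I.resultNbhd A w :=
    I.resultNbhdInduceIso (A := A) (s := s) hν hη w' subset_rfl
  exact e₁.trans (e₂.symm.trans (I.nbhdOfMarkedResultIso (A.induce s) w').symm)

theorem apex_class_transduction_localizes (C F D : Set FGraph) (T : Transduction) (hT : T.Immersive)
    (hD : D ⊆ TImage T F) (hCD : JoinK1 C ⊆ D) :
    ∃ r : ℕ, SqFOnc C (LocClass r F) := by
  obtain ⟨hk, r, hν, hη⟩ := hT
  refine ⟨2 * r, ⟨1, one_pos, T.c + 1, T.I.nbhdOfMarked⟩, rfl, fun G hG => ?_⟩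
  have hapex : (⟨Option G.V, apexGraph G.G⟩ : FGraph) ∈ JoinK1 C := ⟨G, hG, ⟨.refl⟩⟩
  obtain ⟨H, hH, hmem⟩ := hD (hCD hapex)
  obtain ⟨color, ⟨e⟩⟩ := (Transduction.mem_iff_colored hk).1 hmem
  obtain ⟨w, color', ⟨e'⟩⟩ := T.I.exists_ballFGraph_iso_of_apex hν.1 hη e
  exact ⟨_, ⟨H, hH, w, ⟨.refl⟩⟩, (Transduction.mem_iff_colored rfl).2 ⟨color', ⟨e'⟩⟩⟩
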